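/- arXiv:2003.12239 — 3 statements merged into one kernel-verified Lean document; each statement's English description precedes it below -/
import Mathlib

section
/- Suppose T̂* is an empirical Bellman optimality operator (i.e. E_{ω∼η}[T̂*(f,ω)] = T* f for all f ∈ ℝ^d) such that the constant step-size updates f_{n+1} = (1−α)f_n + αT̂*(f_n,ω_n) converge to a stationary distribution ψ*_α with finite first moment. Let f_α ∼ ψ*_α and let f* be the fixed point of T*. Then E[f_α] ≥ f* componentwise, with equality if and only if expectation and the maximization defining T* commute on the stationary distribution. -/
/-!
Taking means in the stationarity equation and using `E_ω T̂*(f, ω) = T* f` gives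
`E f = (1 - α) E f + α E[T* f]`, so `E f = E[T* f]`. As a maximum of affine maps, `T*` satisfies
Jensen's inequality `T*(E f) ≤ E[T* f] = E f`; since `T*` is monotone and a `γ`-contraction in
the sup norm, such a supersolution dominates the fixed point `f*`. Finally `E f = f*` exactly when
`E f` is a fixed point of `T*`, i.e. when `T*(E f) = E[T* f]`.
-/

open MeasureTheory

/-- The Bellman optimality operator `T* f = max_π T^π f`, the componentwise
maximum over a (finite) family of affine Bellman operators `T^π f = R^π + γ P^π f`. -/
noncomputable def bellmanOpt {d : ℕ} {ι : Type*} [Fintype ι] [Nonempty ι]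
    (Rp : ι → Fin d → ℝ) (Pp : ι → Matrix (Fin d) (Fin d) ℝ) (γ : ℝ)
    (f : Fin d → ℝ) : Fin d → ℝ :=
  fun i => ⨆ p : ι, (Rp p i + γ * (Pp p).mulVec f i)

open Matrix

namespace MeasureTheory.Measure

variable {α β γ : Type*} [MeasurableSpace α] [MeasurableSpace β] [MeasurableSpace γ]

theorem bind_map_eq_map_prod (μ : Measure α) (ν : Measure β) [SFinite ν] {G : α × β → γ}
    (hG : Measurable G) : μ.bind (fun a => ν.map fun b => G (a, b)) = (μ.prod ν).map G := by
  have hmap : ∀ a, ν.map (fun b => G (a, b)) = (ν.map (Prod.mk a)).map G := fun a =>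
    (map_map hG measurable_prodMk_left).symm
  simp_rw [hmap]
  rw [Measure.prod, bind, bind, ← join_map_map hG,
    map_map (measurable_map G hG) Measurable.map_prodMk_left]
  rfl

end MeasureTheory.Measure

section Relaxation

variable {E Ω : Type*} [NormedAddCommGroup E] [NormedSpace ℝ E]
  [MeasurableSpace E] [BorelSpace E] [SecondCountableTopology E] [MeasurableSpace Ω]

theorem integral_bind_relaxation (ψ : Measure E) [IsProbabilityMeasure ψ] (η : Measure Ω)
    [IsProbabilityMeasure η] (T : E → Ω → E) (α : ℝ) (hmom : Integrable id ψ)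
    (hT : Integrable (fun p : E × Ω => T p.1 p.2) (ψ.prod η)) :
    ∫ x, x ∂(ψ.bind fun f => η.map fun ω => (1 - α) • f + α • T f ω)
      = (1 - α) • ∫ f, f ∂ψ + α • ∫ f, ∫ ω, T f ω ∂η ∂ψ := by
  set T' := hT.aestronglyMeasurable.mk
  have hTT' : (fun p : E × Ω => T p.1 p.2) =ᵐ[ψ.prod η] T' := hT.aestronglyMeasurable.ae_eq_mk
  set G : E × Ω → E := fun p => (1 - α) • p.1 + α • T' p
  have hG : Measurable G := (measurable_fst.const_smul _).add
    (hT.aestronglyMeasurable.stronglyMeasurable_mk.measurable.const_smul _)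
  have hbind : (ψ.bind fun f => η.map fun ω => (1 - α) • f + α • T f ω) = (ψ.prod η).map G := by
    rw [← Measure.bind_map_eq_map_prod ψ η hG]
    refine Measure.bind_congr_right ?_
    filter_upwards [Measure.ae_ae_of_ae_prod hTT'] with f hf
    exact Measure.map_congr (by filter_upwards [hf] with ω hω; simp only [G, hω])
  have hfst : Integrable (fun p : E × Ω => p.1) (ψ.prod η) := hmom.comp_fst η
  rw [hbind, integral_map (f := fun x => x) hG.aemeasurable aestronglyMeasurable_id,
    integral_add (f := fun p => (1 - α) • p.1) (g := fun p => α • T' p) (hfst.smul _)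
    ((hT.congr hTT').smul α), integral_smul, integral_smul,
    integral_fun_fst (fun f => f), ← integral_congr_ae hTT', integral_prod _ hT]
  simp

theorem integral_eq_integral_integral_of_bind_relaxation_eq (ψ : Measure E)
    [IsProbabilityMeasure ψ] (η : Measure Ω) [IsProbabilityMeasure η] (T : E → Ω → E) {α : ℝ}
    (hα : α ≠ 0) (hstat : (ψ.bind fun f => η.map fun ω => (1 - α) • f + α • T f ω) = ψ)
    (hmom : Integrable id ψ) (hT : Integrable (fun p : E × Ω => T p.1 p.2) (ψ.prod η)) :
    ∫ f, f ∂ψ = ∫ f, ∫ ω, T f ω ∂η ∂ψ := by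
  have h := integral_bind_relaxation ψ η T α hmom hT
  rw [hstat, sub_smul, one_smul, sub_add_eq_add_sub, eq_sub_iff_add_eq, add_right_inj] at h
  exact smul_right_injective E hα h

end Relaxation

theorem Matrix.mulVec_le_mulVec_add_const_of_mem_rowStochastic {n : Type*} [Fintype n]
    [DecidableEq n] {M : Matrix n n ℝ} (hM : M ∈ rowStochastic ℝ n) {g h : n → ℝ} {c : ℝ}
    (hgh : g ≤ h + c • 1) : M *ᵥ g ≤ M *ᵥ h + c • 1 := by
  have hnonneg : 0 ≤ M *ᵥ (h + c • 1 - g) :=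
    nonneg_mulVec_of_mem_rowStochastic hM (sub_nonneg.2 hgh)
  rwa [mulVec_sub, mulVec_add, mulVec_smul,
    one_vecMul_of_mem_rowStochastic hM, sub_nonneg] at hnonneg

section Bellman

variable {d : ℕ} {ι : Type*} (Rp : ι → Fin d → ℝ) (Pp : ι → Matrix (Fin d) (Fin d) ℝ) (γ : ℝ)

def bellmanOp (p : ι) (f : Fin d → ℝ) : Fin d → ℝ :=
  Rp p + γ • Pp p *ᵥ f

theorem integrable_bellmanOp (ψ : Measure (Fin d → ℝ)) [IsFiniteMeasure ψ]
    (hmom : Integrable id ψ) (p : ι) : Integrable (bellmanOp Rp Pp γ p) ψ :=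
  (integrable_const _).add (((toLin' (Pp p)).toContinuousLinearMap.integrable_comp
    hmom).smul γ)

theorem integral_bellmanOp (ψ : Measure (Fin d → ℝ)) [IsProbabilityMeasure ψ]
    (hmom : Integrable id ψ) (p : ι) :
    ∫ f, bellmanOp Rp Pp γ p f ∂ψ = bellmanOp Rp Pp γ p (∫ f, f ∂ψ) := by
  have hmulVec : ∫ f, Pp p *ᵥ f ∂ψ = Pp p *ᵥ ∫ f, f ∂ψ :=
    (toLin' (Pp p)).toContinuousLinearMap.integral_comp_comm hmom
  have hint : Integrable (fun f => Pp p *ᵥ f) ψ :=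
    (toLin' (Pp p)).toContinuousLinearMap.integrable_comp hmom
  simp only [bellmanOp]
  rw [integral_add (f := fun _ => Rp p) (g := fun f => γ • Pp p *ᵥ f) (integrable_const _)
    (hint.smul γ), integral_const, integral_smul, hmulVec, probReal_univ, one_smul]

variable [Fintype ι] [Nonempty ι]

theorem bellmanOp_le_bellmanOpt (p : ι) (f : Fin d → ℝ) :
    bellmanOp Rp Pp γ p f ≤ bellmanOpt Rp Pp γ f := fun i =>
  le_ciSup (f := fun q => bellmanOp Rp Pp γ q f i) (Set.finite_range _).bddAbove p

theorem bellmanOpt_le_iff {f g : Fin d → ℝ} :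
    bellmanOpt Rp Pp γ f ≤ g ↔ ∀ p, bellmanOp Rp Pp γ p f ≤ g :=
  ⟨fun h p => (bellmanOp_le_bellmanOpt Rp Pp γ p f).trans h,
    fun h i => ciSup_le fun p => h p i⟩

theorem bellmanOpt_integral_le (ψ : Measure (Fin d → ℝ)) [IsProbabilityMeasure ψ]
    (hmom : Integrable id ψ) (hint : Integrable (bellmanOpt Rp Pp γ) ψ) :
    bellmanOpt Rp Pp γ (∫ f, f ∂ψ) ≤ ∫ f, bellmanOpt Rp Pp γ f ∂ψ := by
  refine (bellmanOpt_le_iff Rp Pp γ).2 fun p => ?_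
  rw [← integral_bellmanOp Rp Pp γ ψ hmom p]
  exact integral_mono (integrable_bellmanOp Rp Pp γ ψ hmom p) hint
    (bellmanOp_le_bellmanOpt Rp Pp γ p)

variable {Rp Pp γ}

theorem bellmanOpt_le_bellmanOpt_add_const (hP : ∀ p, Pp p ∈ rowStochastic ℝ (Fin d))
    (hγ : 0 ≤ γ) {g h : Fin d → ℝ} {c : ℝ} (hgh : g ≤ h + c • 1) :
    bellmanOpt Rp Pp γ g ≤ bellmanOpt Rp Pp γ h + (γ * c) • 1 := by
  refine (bellmanOpt_le_iff Rp Pp γ).2 fun p => ?_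
  calc bellmanOp Rp Pp γ p g ≤ bellmanOp Rp Pp γ p h + (γ * c) • 1 := by
        have := smul_le_smul_of_nonneg_left
          (mulVec_le_mulVec_add_const_of_mem_rowStochastic (hP p) hgh) hγ
        simp only [bellmanOp, smul_add, smul_smul] at this ⊢
        grw [this, add_assoc]
    _ ≤ bellmanOpt Rp Pp γ h + (γ * c) • 1 := by
        grw [bellmanOp_le_bellmanOpt Rp Pp γ p h]

theorem le_of_bellmanOpt_le (hP : ∀ p, Pp p ∈ rowStochastic ℝ (Fin d)) (hγ0 : 0 ≤ γ)
    (hγ1 : γ < 1) {g h : Fin d → ℝ} (hg : bellmanOpt Rp Pp γ g ≤ g)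
    (hh : bellmanOpt Rp Pp γ h = h) : h ≤ g := by
  intro i
  have : Nonempty (Fin d) := ⟨i⟩
  -- `c = max (h - g)` satisfies `c ≤ γ c` by contraction, hence `c ≤ 0`.
  obtain ⟨j, hj⟩ := Finite.exists_max fun j => h j - g j
  have hhg : h ≤ g + (h j - g j) • 1 := fun k => by
    simp only [Pi.add_apply, Pi.smul_apply, Pi.one_apply, smul_eq_mul, mul_one]
    linarith [hj k]
  have hcontr : h ≤ g + (γ * (h j - g j)) • 1 := calc
    h = bellmanOpt Rp Pp γ h := hh.symm
    _ ≤ bellmanOpt Rp Pp γ g + (γ * (h j - g j)) • 1 :=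
      bellmanOpt_le_bellmanOpt_add_const hP hγ0 hhg
    _ ≤ g + (γ * (h j - g j)) • 1 := by grw [hg]
  have hj' := hcontr j
  simp only [Pi.add_apply, Pi.smul_apply, Pi.one_apply, smul_eq_mul, mul_one] at hj'
  have hjnonpos : h j - g j ≤ 0 := by nlinarith
  linarith [hj i]

end Bellman

theorem stationary_mean_of_optimality_operator_overestimates_general
    {d : ℕ} {Ω ι : Type*} [MeasurableSpace Ω] [Fintype ι] [Nonempty ι]
    (η : Measure Ω) (hη : IsProbabilityMeasure η)
    -- the family of (affine) Bellman operators T^π f = R^π + γ P^π f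
    (Rp : ι → Fin d → ℝ) (Pp : ι → Matrix (Fin d) (Fin d) ℝ)
    (hPnn : ∀ p i j, 0 ≤ Pp p i j) (hProw : ∀ p i, ∑ j, Pp p i j = 1)
    (γ : ℝ) (hγ0 : 0 ≤ γ) (hγ1 : γ < 1)
    -- the stochastic operator, an empirical Bellman optimality operator
    (That : (Fin d → ℝ) → Ω → (Fin d → ℝ))
    (hEmp : ∀ f, ∫ ω, That f ω ∂η = bellmanOpt Rp Pp γ f)
    (α : ℝ) (hα0 : 0 < α)
    -- the stationary distribution of the update f ↦ (1−α) f + α T̂*(f,ω)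
    (ψ : Measure (Fin d → ℝ)) (hψ : IsProbabilityMeasure ψ)
    (hstat : ψ.bind (fun f => η.map fun ω => (1 - α) • f + α • That f ω) = ψ)
    -- finite first moment, and integrability of the (stochastic) targets
    (hmom : Integrable (id : (Fin d → ℝ) → (Fin d → ℝ)) ψ)
    (hTint : Integrable (fun p : (Fin d → ℝ) × Ω => That p.1 p.2) (ψ.prod η))
    (hTsint : Integrable (fun f => bellmanOpt Rp Pp γ f) ψ)
    -- the fixed point of T*
    (fstar : Fin d → ℝ) (hfix : bellmanOpt Rp Pp γ fstar = fstar) :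
    fstar ≤ ∫ f, f ∂ψ
    ∧ ((∫ f, f ∂ψ) = fstar ↔
        (∫ f, bellmanOpt Rp Pp γ f ∂ψ) = bellmanOpt Rp Pp γ (∫ f, f ∂ψ)) := by
  have hP : ∀ p, Pp p ∈ rowStochastic ℝ (Fin d) := fun p =>
    mem_rowStochastic_iff_sum.2 ⟨hPnn p, hProw p⟩
  have hmean : ∫ f, f ∂ψ = ∫ f, bellmanOpt Rp Pp γ f ∂ψ := by
    simpa only [hEmp] using
      integral_eq_integral_integral_of_bind_relaxation_eq ψ η That hα0.ne' hstat hmom hTint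
  have hsuper : bellmanOpt Rp Pp γ (∫ f, f ∂ψ) ≤ ∫ f, f ∂ψ :=
    hmean ▸ bellmanOpt_integral_le Rp Pp γ ψ hmom hTsint
  have hle : fstar ≤ ∫ f, f ∂ψ := le_of_bellmanOpt_le hP hγ0 hγ1 hsuper hfix
  refine ⟨hle, fun heq => by rw [← hmean, heq, hfix], fun hcomm => ?_⟩
  have hfix' : bellmanOpt Rp Pp γ (∫ f, f ∂ψ) = ∫ f, f ∂ψ := hcomm ▸ hmean.symm
  exact le_antisymm (le_of_bellmanOpt_le hP hγ0 hγ1 hfix.le hfix') hle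

theorem stationary_mean_of_optimality_operator_overestimates
    {d : ℕ} {Ω ι : Type*} [MeasurableSpace Ω] [Fintype ι] [Nonempty ι]
    (η : Measure Ω) (hη : IsProbabilityMeasure η)
    -- the family of (affine) Bellman operators T^π f = R^π + γ P^π f
    (Rp : ι → Fin d → ℝ) (Pp : ι → Matrix (Fin d) (Fin d) ℝ)
    (hPnn : ∀ p i j, 0 ≤ Pp p i j) (hProw : ∀ p i, ∑ j, Pp p i j = 1)
    (γ : ℝ) (hγ0 : 0 ≤ γ) (hγ1 : γ < 1)
    -- the stochastic operator, an empirical Bellman optimality operator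
    (That : (Fin d → ℝ) → Ω → (Fin d → ℝ))
    (hEmp : ∀ f, ∫ ω, That f ω ∂η = bellmanOpt Rp Pp γ f)
    (α : ℝ) (hα0 : 0 < α) (hα1 : α ≤ 1)
    -- the stationary distribution of the update f ↦ (1−α) f + α T̂*(f,ω)
    (ψ : Measure (Fin d → ℝ)) (hψ : IsProbabilityMeasure ψ)
    (hstat : ψ.bind (fun f => η.map fun ω => (1 - α) • f + α • That f ω) = ψ)
    -- finite first moment, and integrability of the (stochastic) targets
    (hmom : Integrable (id : (Fin d → ℝ) → (Fin d → ℝ)) ψ)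
    (hTint : Integrable (fun p : (Fin d → ℝ) × Ω => That p.1 p.2) (ψ.prod η))
    (hTsint : Integrable (fun f => bellmanOpt Rp Pp γ f) ψ)
    -- the fixed point of T*
    (fstar : Fin d → ℝ) (hfix : bellmanOpt Rp Pp γ fstar = fstar) :
    fstar ≤ ∫ f, f ∂ψ
    ∧ ((∫ f, f ∂ψ) = fstar ↔
        (∫ f, bellmanOpt Rp Pp γ f ∂ψ) = bellmanOpt Rp Pp γ (∫ f, f ∂ψ)) :=
  stationary_mean_of_optimality_operator_overestimates_general η hη Rp Pp hPnn hProw γ hγ0 hγ1 That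
    hEmp α hα0 ψ hψ hstat hmom hTint hTsint fstar hfix
end

section
/- The optimal policy π* is an aperiodic state of the optimistic-policy-iteration chain on policies: K(π*, π*) > 0, i.e. with positive probability the greedy policy with respect to the sampled returns G^{π*} is again π*. -/
/-!
STATEMENT 8: The optimal policy π* is an aperiodic state of the
optimistic-policy-iteration chain on policies: K(π*, π*) > 0, i.e. with
positive probability the greedy policy with respect to the sampled returns
G^{π*} is again π*.
-/

open MeasureTheory

/-- The greedy policy for an action-value function `Q`, with the fixed consistent
tie-breaking rule given by a linear order on actions (least maximizer). -/
noncomputable def greedySel {S A : Type*} [Fintype A] [Nonempty A] [LinearOrder A]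
    (Q : S → A → ℝ) (s : S) : A := by
  classical
  exact (Finset.univ.filter fun a => ∀ a', Q s a' ≤ Q s a).min' (by
    obtain ⟨a, -, ha⟩ := Finset.exists_max_image Finset.univ (fun a => Q s a)
      ⟨Classical.arbitrary A, Finset.mem_univ _⟩
    exact ⟨a, Finset.mem_filter.mpr
      ⟨Finset.mem_univ _, fun a' => ha a' (Finset.mem_univ _)⟩⟩)

/-!
Perturb the sampled returns towards favouring `π*`: at every state, let the return of `π* s` be
at least its mean `Q*(s, π* s)` and every other return at most its mean `Q*(s, a)`. Since `π* s`
is the least maximiser of `Q*(s, ·)`, it is then also the least maximiser of the sampled returns,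
so the greedy policy is again `π*`. By the first moment method each of these finitely many
independent events has positive probability, hence so does their intersection.
-/

section Greedy

variable {S A : Type*} [Fintype A] [Nonempty A] [LinearOrder A]

theorem greedySel_eq_iff {Q : S → A → ℝ} {s : S} {a : A} :
    greedySel Q s = a ↔
      (∀ a', Q s a' ≤ Q s a) ∧ ∀ b, (∀ a', Q s a' ≤ Q s b) → a ≤ b := by
  classical
  unfold greedySel
  simp only [Finset.min'_eq_iff, Finset.mem_filter, Finset.mem_univ, true_and]

theorem greedySel_eq_of_le_of_forall_ne_le {Q g : S → A → ℝ} {s : S} {a : A}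
    (hQ : greedySel Q s = a) (hup : Q s a ≤ g s a) (hdown : ∀ b ≠ a, g s b ≤ Q s b) :
    greedySel g s = a := by
  obtain ⟨hmax, hleast⟩ := greedySel_eq_iff.mp hQ
  have hgmax : ∀ a', g s a' ≤ g s a := fun a' => by
    rcases eq_or_ne a' a with rfl | ha'
    · exact le_rfl
    · exact (hdown a' ha').trans ((hmax a').trans hup)
  refine greedySel_eq_iff.mpr ⟨hgmax, fun b hb => ?_⟩
  rcases eq_or_ne b a with rfl | hba
  · exact le_rfl
  · exact hleast b fun a' => (hmax a').trans (hup.trans ((hb a).trans (hdown b hba)))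

end Greedy

theorem MeasureTheory.Measure.pi_univ_pi_pos {ι : Type*} [Fintype ι] {X : ι → Type*}
    [∀ i, MeasurableSpace (X i)] {μ : ∀ i, Measure (X i)} [∀ i, SigmaFinite (μ i)]
    {E : ∀ i, Set (X i)} (hE : ∀ i, 0 < μ i (E i)) :
    0 < Measure.pi μ (Set.univ.pi E) := by
  rw [Measure.pi_pi, CanonicallyOrderedAdd.prod_pos]
  exact fun i _ => hE i

theorem MeasureTheory.integrable_id_of_measure_compl_Icc_eq_zero {μ : Measure ℝ}
    [IsFiniteMeasure μ] {a b : ℝ} (h : μ (Set.Icc a b)ᶜ = 0) : Integrable (fun x => x) μ :=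
  Integrable.of_mem_Icc a b aemeasurable_id (mem_ae_iff.mpr h)

theorem optimal_policy_is_aperiodic_general
    {S A : Type*} [Fintype S] [Fintype A] [Nonempty A] [LinearOrder A]
    (γ Rmax : ℝ)
    -- the action-value functions Q^π, satisfying the Bellman equations
    (Qpi : (S → A) → S → A → ℝ)
    -- the return distributions G^π(s,a): mean Q^π(s,a), bounded support,
    -- mutually independent across state-action pairs (product measure below)
    (ret : (S → A) → S → A → Measure ℝ)
    (hret : ∀ π s a, IsProbabilityMeasure (ret π s a))
    (hsupp : ∀ π s a, (ret π s a) (Set.Icc 0 (Rmax / (1 - γ)))ᶜ = 0)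
    (hmean : ∀ π s a, (∫ x, x ∂ret π s a) = Qpi π s a)
    -- the optimal policy π*: it dominates every policy and is greedy with
    -- respect to its own action-value function Q* = Q^{π*}
    (πstar : S → A)
    (hgreedystar : greedySel (Qpi πstar) = πstar) :
    0 < (Measure.pi fun s => Measure.pi fun a => ret πstar s a)
          {g : S → A → ℝ | greedySel g = πstar} := by
  have hprob := hret πstar
  let E : S → A → Set ℝ := fun s a =>
    if a = πstar s then {x | Qpi πstar s a ≤ x} else {x | x ≤ Qpi πstar s a}
  have hE : ∀ s a, 0 < ret πstar s a (E s a) := fun s a => by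
    have hint := integrable_id_of_measure_compl_Icc_eq_zero (hsupp πstar s a)
    simp only [E, ← hmean]
    split_ifs
    · exact measure_integral_le_pos hint
    · exact measure_le_integral_pos hint
  have hsub : (Set.univ.pi fun s => Set.univ.pi (E s)) ⊆ {g | greedySel g = πstar} :=
    fun g hg => funext fun s =>
      greedySel_eq_of_le_of_forall_ne_le (congrFun hgreedystar s)
        (by simpa [E] using hg s trivial (πstar s) trivial)
        (fun b hb => by simpa [E, hb] using hg s trivial b trivial)
  exact (Measure.pi_univ_pi_pos fun s => Measure.pi_univ_pi_pos (hE s)).trans_le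
    (measure_mono hsub)

theorem optimal_policy_is_aperiodic
    {S A : Type*} [Fintype S] [Nonempty S] [Fintype A] [Nonempty A] [LinearOrder A]
    (γ Rmax : ℝ) (hγ0 : 0 ≤ γ) (hγ1 : γ < 1) (hRmax : 0 ≤ Rmax)
    -- transition probabilities and mean rewards of the finite MDP
    (P : S → A → S → ℝ) (hPnn : ∀ s a s', 0 ≤ P s a s') (hProw : ∀ s a, ∑ s', P s a s' = 1)
    (rbar : S → A → ℝ) (hrbar : ∀ s a, rbar s a ∈ Set.Icc 0 Rmax)
    -- the action-value functions Q^π, satisfying the Bellman equations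
    (Qpi : (S → A) → S → A → ℝ)
    (hbell : ∀ π s a, Qpi π s a = rbar s a + γ * ∑ s', P s a s' * Qpi π s' (π s'))
    -- the return distributions G^π(s,a): mean Q^π(s,a), bounded support,
    -- mutually independent across state-action pairs (product measure below)
    (ret : (S → A) → S → A → Measure ℝ)
    (hret : ∀ π s a, IsProbabilityMeasure (ret π s a))
    (hsupp : ∀ π s a, (ret π s a) (Set.Icc 0 (Rmax / (1 - γ)))ᶜ = 0)
    (hmean : ∀ π s a, (∫ x, x ∂ret π s a) = Qpi π s a)
    -- the optimal policy π*: it dominates every policy and is greedy with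
    -- respect to its own action-value function Q* = Q^{π*}
    (πstar : S → A)
    (hopt : ∀ π s a, Qpi π s a ≤ Qpi πstar s a)
    (hgreedystar : greedySel (Qpi πstar) = πstar) :
    0 < (Measure.pi fun s => Measure.pi fun a => ret πstar s a)
          {g : S → A → ℝ | greedySel g = πstar} :=
  optimal_policy_is_aperiodic_general γ Rmax Qpi ret hret hsupp hmean πstar hgreedystar
end

section
/- (Reachability of π*.) For every deterministic initial policy π₀ there exists n(π₀) ∈ ℕ such that K^{n(π₀)}(π₀, π*) > 0: the optimistic-policy-iteration chain on policies reaches the optimal policy π* from π₀ with positive probability in finitely many steps. -/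
/-!
STATEMENT 9 (Reachability of π*): for every deterministic initial policy π₀
there exists n(π₀) ∈ ℕ such that K^{n(π₀)}(π₀, π*) > 0: the
optimistic-policy-iteration chain on policies reaches the optimal policy π*
from π₀ with positive probability in finitely many steps.
-/

open MeasureTheory

/-- The optimistic-policy-iteration kernel on deterministic policies:
`K π π'` is the probability that `π'` is the greedy policy for the (mutually
independent) sampled returns `G^π`. -/
noncomputable def opiKernel {S A : Type*} [Fintype S] [Fintype A] [Nonempty A] [LinearOrder A]
    (ret : (S → A) → S → A → Measure ℝ) (π π' : S → A) : ENNReal :=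
  (Measure.pi fun s => Measure.pi fun a => ret π s a) {g : S → A → ℝ | greedySel g = π'}

/-- The n-step iterate Kⁿ of the optimistic-policy-iteration policy kernel. -/
noncomputable def opiKernelIter {S A : Type*} [Fintype S] [DecidableEq S]
    [Fintype A] [Nonempty A] [LinearOrder A]
    (ret : (S → A) → S → A → Measure ℝ) : ℕ → (S → A) → (S → A) → ENNReal
  | 0, π, π' => if π = π' then 1 else 0
  | n + 1, π, π' => ∑ π'' : S → A, opiKernel ret π π'' * opiKernelIter ret n π'' π'

/-!
Policy iteration `π ↦ greedySel (Q^π)` never decreases `Q^π`, so along its orbit from `π₀` the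
values `Q^π` form a monotone sequence in a finite set; once a policy repeats, the values are
stationary and the next policy is greedy for its own `Q`, which forces it to be `π*`. Each
policy-iteration step has positive probability under `K`: every return `G^π(s,a)` lies on either
side of its mean `Q^π(s,a)` with positive probability, and on the product of these events the
greedy policy of the sampled returns is the greedy policy of `Q^π`.
-/

section Greedy

variable {S A : Type*} [Fintype A] [Nonempty A] [LinearOrder A]

lemma le_greedySel (Q : S → A → ℝ) (s : S) (a : A) : Q s a ≤ Q s (greedySel Q s) := by
  classical
  have h := Finset.min'_mem (Finset.univ.filter fun a => ∀ a', Q s a' ≤ Q s a) (by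
    obtain ⟨b, -, hb⟩ := Finset.exists_max_image Finset.univ (fun a => Q s a)
      ⟨Classical.arbitrary A, Finset.mem_univ _⟩
    exact ⟨b, Finset.mem_filter.mpr ⟨Finset.mem_univ _, fun a' => hb a' (Finset.mem_univ _)⟩⟩)
  exact (Finset.mem_filter.mp h).2 a

lemma greedySel_le_of_forall_le (Q : S → A → ℝ) (s : S) {b : A} (hb : ∀ a, Q s a ≤ Q s b) :
    greedySel Q s ≤ b := by
  classical
  exact Finset.min'_le _ _ (Finset.mem_filter.mpr ⟨Finset.mem_univ _, hb⟩)

lemma lt_greedySel_of_lt (Q : S → A → ℝ) (s : S) {a : A} (ha : a < greedySel Q s) :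
    Q s a < Q s (greedySel Q s) :=
  (le_greedySel Q s a).lt_of_not_ge fun hge =>
    ha.not_ge <| greedySel_le_of_forall_le Q s fun a' => (le_greedySel Q s a').trans hge

lemma greedySel_eq_of_forall (Q : S → A → ℝ) (s : S) {b : A} (hmax : ∀ a, Q s a ≤ Q s b)
    (hstrict : ∀ a < b, Q s a < Q s b) : greedySel Q s = b :=
  (greedySel_le_of_forall_le Q s hmax).eq_of_not_lt fun hlt =>
    (hstrict _ hlt).not_ge (le_greedySel Q s b)

lemma greedySel_eq_greedySel_of_le {Q G : S → A → ℝ}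
    (hgreedy : ∀ s, Q s (greedySel Q s) ≤ G s (greedySel Q s))
    (hother : ∀ s a, a ≠ greedySel Q s → G s a ≤ Q s a) :
    greedySel G = greedySel Q := by
  funext s
  apply greedySel_eq_of_forall
  · intro a
    by_cases ha : a = greedySel Q s
    · rw [ha]
    · exact (hother s a ha).trans ((le_greedySel Q s a).trans (hgreedy s))
  · intro a ha
    calc G s a ≤ Q s a := hother s a ha.ne
      _ < Q s (greedySel Q s) := lt_greedySel_of_lt Q s ha
      _ ≤ G s (greedySel Q s) := hgreedy s

end Greedy

section Bellman

variable {S A : Type*} [Fintype S] {γ : ℝ} {P : S → A → S → ℝ} {r : S → A → ℝ}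
  {Q : (S → A) → S → A → ℝ}

lemma sub_eq_of_bellman (hbell : ∀ π s a, Q π s a = r s a + γ * ∑ s', P s a s' * Q π s' (π s'))
    (α β : S → A) (s : S) (a : A) :
    Q α s a - Q β s a = γ * ∑ s', P s a s' * (Q α s' (α s') - Q β s' (β s')) := by
  simp only [hbell α s a, hbell β s a, mul_sub, Finset.sum_sub_distrib]
  ring

lemma le_of_bellman (hγ0 : 0 ≤ γ) (hγ1 : γ < 1) (hPnn : ∀ s a s', 0 ≤ P s a s')
    (hProw : ∀ s a, ∑ s', P s a s' = 1)
    (hbell : ∀ π s a, Q π s a = r s a + γ * ∑ s', P s a s' * Q π s' (π s'))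
    {α β : S → A} (σ : S → A) (hα : ∀ s, Q α s (α s) ≤ Q α s (σ s))
    (hβ : ∀ s, Q β s (σ s) ≤ Q β s (β s)) : Q α ≤ Q β := by
  intro s a
  have : Nonempty S := ⟨s⟩
  set D : S → A → ℝ := fun s a => Q α s a - Q β s a
  -- `D` is bounded by `γ` times its maximum along `σ`, which must therefore be nonpositive.
  obtain ⟨t, ht⟩ := Finite.exists_max fun s => D s (σ s)
  have hbound : ∀ s a, D s a ≤ γ * D t (σ t) := by
    intro s a
    rw [show D s a = _ from sub_eq_of_bellman hbell α β s a]
    refine mul_le_mul_of_nonneg_left ?_ hγ0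
    calc ∑ s', P s a s' * (Q α s' (α s') - Q β s' (β s'))
        ≤ ∑ s', P s a s' * D t (σ t) := by
          refine Finset.sum_le_sum fun s' _ => mul_le_mul_of_nonneg_left ?_ (hPnn s a s')
          linarith [hα s', hβ s', ht s']
      _ = D t (σ t) := by rw [← Finset.sum_mul, hProw, one_mul]
  have hmax := hbound t (σ t)
  have hsa := hbound s a
  have : D s a ≤ 0 := by nlinarith
  exact sub_nonpos.mp this

variable [Fintype A] [Nonempty A] [LinearOrder A]

lemma le_greedySel_of_bellman (hγ0 : 0 ≤ γ) (hγ1 : γ < 1) (hPnn : ∀ s a s', 0 ≤ P s a s')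
    (hProw : ∀ s a, ∑ s', P s a s' = 1)
    (hbell : ∀ π s a, Q π s a = r s a + γ * ∑ s', P s a s' * Q π s' (π s')) (π : S → A) :
    Q π ≤ Q (greedySel (Q π)) :=
  le_of_bellman hγ0 hγ1 hPnn hProw hbell _ (fun s => le_greedySel (Q π) s (π s)) fun _ => le_rfl

lemma eq_of_greedySel_eq_self (hγ0 : 0 ≤ γ) (hγ1 : γ < 1) (hPnn : ∀ s a s', 0 ≤ P s a s')
    (hProw : ∀ s a, ∑ s', P s a s' = 1)
    (hbell : ∀ π s a, Q π s a = r s a + γ * ∑ s', P s a s' * Q π s' (π s'))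
    {πstar : S → A} (hopt : ∀ π, Q π ≤ Q πstar) (hgreedystar : greedySel (Q πstar) = πstar)
    {π : S → A} (hπ : greedySel (Q π) = π) : π = πstar := by
  have hge : Q πstar ≤ Q π := le_of_bellman hγ0 hγ1 hPnn hProw hbell πstar
    (fun _ => le_rfl) fun s => by simpa only [hπ] using le_greedySel (Q π) s (πstar s)
  rw [← hπ, le_antisymm (hopt π) hge, hgreedystar]

end Bellman

lemma Function.exists_map_iterate_succ_eq_of_le {α β : Type*} [Finite α] [PartialOrder β]
    (f : α → α) (V : α → β) (hV : ∀ x, V x ≤ V (f x)) (x : α) :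
    ∃ n, V (f^[n + 1] x) = V (f^[n] x) := by
  have hmono : Monotone fun n => V (f^[n] x) :=
    monotone_nat_of_le_succ fun n => by simpa only [Function.iterate_succ_apply'] using hV _
  obtain ⟨i, j, hne, heq⟩ := Finite.exists_ne_map_eq_of_infinite fun n => f^[n] x
  wlog hij : i < j generalizing i j
  · exact this j i hne.symm heq.symm (hne.lt_or_gt.resolve_left hij)
  refine ⟨i, le_antisymm ?_ (hmono i.le_succ)⟩
  calc V (f^[i + 1] x) ≤ V (f^[j] x) := hmono hij
    _ = V (f^[i] x) := by rw [← heq]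

section Kernel

variable {S A : Type*} [Fintype S] [Fintype A] [Nonempty A] [LinearOrder A]
  {ret : (S → A) → S → A → Measure ℝ}

lemma opiKernel_greedySel_pos {π : S → A} [∀ s a, IsProbabilityMeasure (ret π s a)]
    (Q : S → A → ℝ) (hint : ∀ s a, Integrable id (ret π s a))
    (hmean : ∀ s a, ∫ x, x ∂ret π s a = Q s a) :
    0 < opiKernel ret π (greedySel Q) := by
  classical
  let I : S → A → Set ℝ := fun s a =>
    if a = greedySel Q s then {x | Q s a ≤ x} else {x | x ≤ Q s a}
  have hsub : Set.univ.pi (fun s => Set.univ.pi (I s)) ⊆ {g | greedySel g = greedySel Q} := by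
    intro g hg
    have hmem : ∀ s a, g s a ∈ I s a := fun s a => hg s trivial a trivial
    refine greedySel_eq_greedySel_of_le (fun s => ?_) fun s a ha => ?_
    · simpa [I] using hmem s (greedySel Q s)
    · simpa [I, ha] using hmem s a
  have hpos : ∀ s a, 0 < ret π s a (I s a) := by
    intro s a
    by_cases ha : a = greedySel Q s
    · simpa [I, ha, hmean] using measure_integral_le_pos (hint s (greedySel Q s))
    · simpa [I, ha, hmean] using measure_le_integral_pos (hint s a)
  calc 0 < ∏ s, ∏ a, ret π s a (I s a) :=
        CanonicallyOrderedAdd.prod_pos.mpr fun s _ =>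
          CanonicallyOrderedAdd.prod_pos.mpr fun a _ => hpos s a
    _ = (Measure.pi fun s => Measure.pi (ret π s)) (Set.univ.pi fun s => Set.univ.pi (I s)) := by
        simp only [Measure.pi_pi]
    _ ≤ opiKernel ret π (greedySel Q) := measure_mono hsub

lemma opiKernelIter_iterate_pos [DecidableEq S] {f : (S → A) → S → A}
    (hf : ∀ π, 0 < opiKernel ret π (f π)) (n : ℕ) (π : S → A) :
    0 < opiKernelIter ret n π (f^[n] π) := by
  induction n generalizing π with
  | zero => simp [opiKernelIter]
  | succ n ih =>
    calc 0 < opiKernel ret π (f π) * opiKernelIter ret n (f π) (f^[n + 1] π) :=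
          ENNReal.mul_pos (hf π).ne' (ih (f π)).ne'
      _ ≤ ∑ π', opiKernel ret π π' * opiKernelIter ret n π' (f^[n + 1] π) :=
          Finset.single_le_sum (f := fun π' => opiKernel ret π π' * _)
            (fun _ _ => zero_le) (Finset.mem_univ (f π))
      _ = opiKernelIter ret (n + 1) π (f^[n + 1] π) := rfl

end Kernel

theorem optimal_policy_reachable_general
    {S A : Type*} [Fintype S] [DecidableEq S]
    [Fintype A] [Nonempty A] [LinearOrder A]
    (γ Rmax : ℝ) (hγ0 : 0 ≤ γ) (hγ1 : γ < 1)
    -- transition probabilities and mean rewards of the finite MDP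
    (P : S → A → S → ℝ) (hPnn : ∀ s a s', 0 ≤ P s a s') (hProw : ∀ s a, ∑ s', P s a s' = 1)
    (rbar : S → A → ℝ)
    -- the action-value functions Q^π, satisfying the Bellman equations
    (Qpi : (S → A) → S → A → ℝ)
    (hbell : ∀ π s a, Qpi π s a = rbar s a + γ * ∑ s', P s a s' * Qpi π s' (π s'))
    -- the return distributions G^π(s,a): mean Q^π(s,a), bounded support
    (ret : (S → A) → S → A → Measure ℝ)
    (hret : ∀ π s a, IsProbabilityMeasure (ret π s a))
    (hsupp : ∀ π s a, (ret π s a) (Set.Icc 0 (Rmax / (1 - γ)))ᶜ = 0)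
    (hmean : ∀ π s a, (∫ x, x ∂ret π s a) = Qpi π s a)
    -- the optimal policy π*
    (πstar : S → A)
    (hopt : ∀ π s a, Qpi π s a ≤ Qpi πstar s a)
    (hgreedystar : greedySel (Qpi πstar) = πstar)
    -- an arbitrary initial policy
    (π₀ : S → A) :
    ∃ n : ℕ, 0 < opiKernelIter ret n π₀ πstar := by
  let improve : (S → A) → S → A := fun π => greedySel (Qpi π)
  have hstep : ∀ π, 0 < opiKernel ret π (improve π) := fun π =>
    haveI := hret π
    opiKernel_greedySel_pos _ (fun s a => Integrable.of_mem_Icc _ _ aemeasurable_id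
      (mem_ae_iff.mpr (hsupp π s a))) (hmean π)
  obtain ⟨n, hn⟩ := Function.exists_map_iterate_succ_eq_of_le improve Qpi
    (le_greedySel_of_bellman hγ0 hγ1 hPnn hProw hbell) π₀
  have hfix : greedySel (Qpi (improve^[n + 1] π₀)) = improve^[n + 1] π₀ := by
    rw [hn, Function.iterate_succ_apply']
  have hstar : improve^[n + 1] π₀ = πstar :=
    eq_of_greedySel_eq_self hγ0 hγ1 hPnn hProw hbell hopt hgreedystar hfix
  exact ⟨n + 1, hstar ▸ opiKernelIter_iterate_pos hstep (n + 1) π₀⟩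

theorem optimal_policy_reachable
    {S A : Type*} [Fintype S] [DecidableEq S] [Nonempty S]
    [Fintype A] [Nonempty A] [LinearOrder A]
    (γ Rmax : ℝ) (hγ0 : 0 ≤ γ) (hγ1 : γ < 1) (hRmax : 0 ≤ Rmax)
    -- transition probabilities and mean rewards of the finite MDP
    (P : S → A → S → ℝ) (hPnn : ∀ s a s', 0 ≤ P s a s') (hProw : ∀ s a, ∑ s', P s a s' = 1)
    (rbar : S → A → ℝ) (hrbar : ∀ s a, rbar s a ∈ Set.Icc 0 Rmax)
    -- the action-value functions Q^π, satisfying the Bellman equations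
    (Qpi : (S → A) → S → A → ℝ)
    (hbell : ∀ π s a, Qpi π s a = rbar s a + γ * ∑ s', P s a s' * Qpi π s' (π s'))
    -- the return distributions G^π(s,a): mean Q^π(s,a), bounded support
    (ret : (S → A) → S → A → Measure ℝ)
    (hret : ∀ π s a, IsProbabilityMeasure (ret π s a))
    (hsupp : ∀ π s a, (ret π s a) (Set.Icc 0 (Rmax / (1 - γ)))ᶜ = 0)
    (hmean : ∀ π s a, (∫ x, x ∂ret π s a) = Qpi π s a)
    -- the optimal policy π*
    (πstar : S → A)
    (hopt : ∀ π s a, Qpi π s a ≤ Qpi πstar s a)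
    (hgreedystar : greedySel (Qpi πstar) = πstar)
    -- an arbitrary initial policy
    (π₀ : S → A) :
    ∃ n : ℕ, 0 < opiKernelIter ret n π₀ πstar :=
  optimal_policy_reachable_general γ Rmax hγ0 hγ1 P hPnn hProw rbar Qpi hbell ret hret hsupp hmean
    πstar hopt hgreedystar π₀
end
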